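/- CAFe-S convergence: under L-smoothness of f (bounded below by f*), bounded dissimilarity B², server-client dissimilarity G² with ωG²B² < 1, and γ ≤ 1/L, the iterates x^{k+1} = x^k - γ(∇f(x^k) - ē^k) with E||ē^k||² ≤ ωG²B² E||∇f(x^k)||² satisfy (1/K)∑_{k=0}^{K-1} E||∇f(x^k)||² ≤ 2(f(x^0) - f*)/(γK(1 - ωG²B²)). -/

import Mathlib

/-!
Smoothness turns one inexact gradient step into the descent inequality
`f(x⁺) ≤ f(x) - γ/2 ‖∇f(x)‖² + γ/2 ‖ē‖²`, after dropping the term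
`-γ/2 (1 - γL) ‖∇f(x) - ē‖² ≤ 0`. Taking expectations and using the error bound gives
`E f(x^{k+1}) ≤ E f(x^k) - γ/2 (1 - ωG²B²) E‖∇f(x^k)‖²`, and summing over `k < K`
telescopes down to `f(x⁰) - f*`.
-/

open MeasureTheory

section Descent

variable {E : Type*} [NormedAddCommGroup E] [InnerProductSpace ℝ E]

theorem le_of_inexact_gradient_step {f : E → ℝ} {L γ : ℝ} {x g : E}
    (hsmooth : ∀ y, f y ≤ f x + inner ℝ g (y - x) + L / 2 * ‖y - x‖ ^ 2)
    (hγ : 0 ≤ γ) (hγL : γ * L ≤ 1) (e : E) :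
    f (x - γ • (g - e)) ≤ f x - γ / 2 * ‖g‖ ^ 2 + γ / 2 * ‖e‖ ^ 2 := by
  have hbound := hsmooth (x - γ • (g - e))
  have hdiff : x - γ • (g - e) - x = -(γ • (g - e)) := by abel
  have hinner : inner ℝ g (-(γ • (g - e))) = -(γ * (‖g‖ ^ 2 - inner ℝ g e)) := by
    rw [inner_neg_right, inner_smul_right, inner_sub_right, real_inner_self_eq_norm_sq]
  have hnorm : ‖-(γ • (g - e))‖ ^ 2 = γ ^ 2 * ‖g - e‖ ^ 2 := by
    rw [norm_neg, norm_smul, mul_pow, Real.norm_eq_abs, sq_abs]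
  rw [hdiff, hinner, hnorm] at hbound
  have hexpand := norm_sub_sq_real g e
  have hdropped : 0 ≤ γ * ‖g - e‖ ^ 2 * (1 - γ * L) :=
    mul_nonneg (mul_nonneg hγ (sq_nonneg _)) (sub_nonneg.2 hγL)
  nlinarith

variable {Ω : Type*} [MeasurableSpace Ω] {μ : Measure Ω}

theorem integral_le_of_inexact_gradient_step {f : E → ℝ} {gf : E → E} {L γ c : ℝ}
    (hsmooth : ∀ x y, f y ≤ f x + inner ℝ (gf x) (y - x) + L / 2 * ‖y - x‖ ^ 2)
    (hγ : 0 ≤ γ) (hγL : γ * L ≤ 1) {X Y e : Ω → E}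
    (hY : ∀ w, Y w = X w - γ • (gf (X w) - e w))
    (hfX : Integrable (fun w => f (X w)) μ) (hfY : Integrable (fun w => f (Y w)) μ)
    (hg : Integrable (fun w => ‖gf (X w)‖ ^ 2) μ) (he : Integrable (fun w => ‖e w‖ ^ 2) μ)
    (herr : ∫ w, ‖e w‖ ^ 2 ∂μ ≤ c * ∫ w, ‖gf (X w)‖ ^ 2 ∂μ) :
    ∫ w, f (Y w) ∂μ
      ≤ ∫ w, f (X w) ∂μ - γ / 2 * (1 - c) * ∫ w, ‖gf (X w)‖ ^ 2 ∂μ := by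
  have hg' := hg.const_mul (γ / 2)
  have he' := he.const_mul (γ / 2)
  have hsub : Integrable (fun w => f (X w) - γ / 2 * ‖gf (X w)‖ ^ 2) μ := hfX.sub hg'
  have hintegrated : ∫ w, f (Y w) ∂μ
      ≤ ∫ w, (f (X w) - γ / 2 * ‖gf (X w)‖ ^ 2 + γ / 2 * ‖e w‖ ^ 2) ∂μ :=
    integral_mono hfY (hsub.add he') fun w => by
      simpa only [hY w] using le_of_inexact_gradient_step (hsmooth (X w)) hγ hγL (e w)
  rw [integral_add hsub he', integral_sub hfX hg', integral_const_mul,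
    integral_const_mul] at hintegrated
  have herr' := mul_le_mul_of_nonneg_left herr (by positivity)
  linarith

end Descent

theorem sum_range_le_sub_of_le_sub {a b : ℕ → ℝ} (h : ∀ k, a (k + 1) ≤ a k - b k)
    (K : ℕ) :
    ∑ k ∈ Finset.range K, b k ≤ a 0 - a K := by
  rw [← Finset.sum_range_sub']
  exact Finset.sum_le_sum fun k _ => by linarith [h k]

theorem cafe_s_convergence_general (d : ℕ)
    {Ω : Type*} [MeasurableSpace Ω] (μ : Measure Ω) [IsProbabilityMeasure μ]
    (f : EuclideanSpace ℝ (Fin d) → ℝ)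
    (gf : EuclideanSpace ℝ (Fin d) → EuclideanSpace ℝ (Fin d))
    (L γ fstar B2 G2 ω : ℝ) (K : ℕ) (hK : 0 < K)
    (hγ : 0 < γ) (hγL : γ ≤ 1 / L)
    (hc1 : ω * G2 * B2 < 1)
    (hsmooth : ∀ x y, f y ≤ f x + (inner ℝ (gf x) (y - x) : ℝ) + L / 2 * ‖y - x‖ ^ 2)
    (hlb : ∀ x, fstar ≤ f x)
    (x : ℕ → Ω → EuclideanSpace ℝ (Fin d))
    (e : ℕ → Ω → EuclideanSpace ℝ (Fin d))
    (x0 : EuclideanSpace ℝ (Fin d)) (hx0 : ∀ ω', x 0 ω' = x0)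
    (hstep : ∀ k ω', x (k + 1) ω' = x k ω' - γ • (gf (x k ω') - e k ω'))
    (hintf : ∀ k, Integrable (fun ω' => f (x k ω')) μ)
    (hintg : ∀ k, Integrable (fun ω' => ‖gf (x k ω')‖ ^ 2) μ)
    (hinte : ∀ k, Integrable (fun ω' => ‖e k ω'‖ ^ 2) μ)
    (herr : ∀ k, ∫ ω', ‖e k ω'‖ ^ 2 ∂μ
      ≤ ω * G2 * B2 * ∫ ω', ‖gf (x k ω')‖ ^ 2 ∂μ) :
    (1 / (K : ℝ)) * ∑ k ∈ Finset.range K, ∫ ω', ‖gf (x k ω')‖ ^ 2 ∂μ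
      ≤ 2 * (f x0 - fstar) / (γ * K * (1 - ω * G2 * B2)) := by
  set c := ω * G2 * B2
  have hγL' : γ * L ≤ 1 := (le_div_iff₀ (one_div_pos.mp (hγ.trans_le hγL))).mp hγL
  have htelescope := sum_range_le_sub_of_le_sub (a := fun k => ∫ w, f (x k w) ∂μ)
    (b := fun k => γ / 2 * (1 - c) * ∫ w, ‖gf (x k w)‖ ^ 2 ∂μ) (fun k =>
    integral_le_of_inexact_gradient_step hsmooth hγ.le hγL' (hstep k) (hintf k)
      (hintf (k + 1)) (hintg k) (hinte k) (herr k)) K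
  have hstart : ∫ w, f (x 0 w) ∂μ = f x0 := by simp [hx0]
  have hend : fstar ≤ ∫ w, f (x K w) ∂μ := by
    simpa using integral_mono (integrable_const fstar) (hintf K) fun w => hlb (x K w)
  rw [← Finset.mul_sum, hstart] at htelescope
  set S := ∑ k ∈ Finset.range K, ∫ w, ‖gf (x k w)‖ ^ 2 ∂μ
  have hK' : (0 : ℝ) < K := Nat.cast_pos.2 hK
  have hc : 0 < 1 - c := sub_pos.2 hc1
  rw [le_div_iff₀ (by positivity)]
  have hrescale : 1 / (K : ℝ) * S * (γ * K * (1 - c)) = 2 * (γ / 2 * (1 - c) * S) := by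
    field_simp
  linarith

/-- CAFe-S convergence: for `L`-smooth `f` bounded below by `fstar`, step size
`0 < γ ≤ 1/L`, and error sequence with `E‖ē^k‖² ≤ ωG²B² E‖∇f(x^k)‖²`,
`ωG²B² < 1`, the iterates `x^{k+1} = x^k - γ(∇f(x^k) - ē^k)` satisfy
`(1/K)∑_{k<K} E‖∇f(x^k)‖² ≤ 2(f(x⁰) - f*)/(γK(1 - ωG²B²))`. -/
theorem cafe_s_convergence (d : ℕ)
    {Ω : Type*} [MeasurableSpace Ω] (μ : Measure Ω) [IsProbabilityMeasure μ]
    (f : EuclideanSpace ℝ (Fin d) → ℝ)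
    (gf : EuclideanSpace ℝ (Fin d) → EuclideanSpace ℝ (Fin d))
    (L γ fstar B2 G2 ω : ℝ) (K : ℕ) (hK : 0 < K)
    (hL : 0 < L) (hγ : 0 < γ) (hγL : γ ≤ 1 / L)
    (hc0 : 0 ≤ ω * G2 * B2) (hc1 : ω * G2 * B2 < 1)
    (hsmooth : ∀ x y, f y ≤ f x + (inner ℝ (gf x) (y - x) : ℝ) + L / 2 * ‖y - x‖ ^ 2)
    (hlb : ∀ x, fstar ≤ f x)
    (x : ℕ → Ω → EuclideanSpace ℝ (Fin d))
    (e : ℕ → Ω → EuclideanSpace ℝ (Fin d))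
    (x0 : EuclideanSpace ℝ (Fin d)) (hx0 : ∀ ω', x 0 ω' = x0)
    (hstep : ∀ k ω', x (k + 1) ω' = x k ω' - γ • (gf (x k ω') - e k ω'))
    (hintf : ∀ k, Integrable (fun ω' => f (x k ω')) μ)
    (hintg : ∀ k, Integrable (fun ω' => ‖gf (x k ω')‖ ^ 2) μ)
    (hinte : ∀ k, Integrable (fun ω' => ‖e k ω'‖ ^ 2) μ)
    (herr : ∀ k, ∫ ω', ‖e k ω'‖ ^ 2 ∂μ
      ≤ ω * G2 * B2 * ∫ ω', ‖gf (x k ω')‖ ^ 2 ∂μ) :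
    (1 / (K : ℝ)) * ∑ k ∈ Finset.range K, ∫ ω', ‖gf (x k ω')‖ ^ 2 ∂μ
      ≤ 2 * (f x0 - fstar) / (γ * K * (1 - ω * G2 * B2)) :=
  cafe_s_convergence_general d μ f gf L γ fstar B2 G2 ω K hK hγ hγL hc1 hsmooth hlb x e x0 hx0 hstep
    hintf hintg hinte herr
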